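/- arXiv:1801.06390 — 5 statements merged into one kernel-verified Lean document; each statement's English description precedes it below -/
import Mathlib

section
/- (Weber's second exponential integral.) For all real a > 0, c > 0 and q > 0, ∫_0^∞ x·e^{−a²x²}·J₀(c·x)·J₀(q·x) dx = (1/(2a²))·exp(−(q² + c²)/(4a²))·I₀(q·c/(2a²)). -/
/-!
Write `F(w) = ∑ wᵐ/(m!)²`, so that `J₀(rx) = F(-(r/2)² x²)` and `I₀(x) = F((x/2)²)`. The integrand
expands into a double power series whose terms are Gaussian moments
`∫₀^∞ x^(2k+1) e^(-bx²) dx = k!/(2b^(k+1))`; termwise integration is legitimate because the series of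
the absolute values is the same series evaluated at `|s|, |t|`, which converges. What remains is
`∑_{m,n} C(m+n,m) sᵐ tⁿ/(m! n!) = e^(s+t) F(st)`: multiply out `F(st) eˢ eᵗ` and collect the
coefficient of `sᵐ tⁿ` using Vandermonde's identity `∑ₖ C(m,k) C(n,k) = C(m+n,m)`.
-/

open MeasureTheory Real Set

/-- The Bessel function of the first kind of order zero, defined by its
everywhere-convergent power series. -/
noncomputable def besselJ0 (x : ℝ) : ℝ :=
  ∑' m : ℕ, (-1 : ℝ) ^ m * (x / 2) ^ (2 * m) / (Nat.factorial m : ℝ) ^ 2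

/-- The modified Bessel function of the first kind of order zero. -/
noncomputable def besselI0 (x : ℝ) : ℝ :=
  ∑' m : ℕ, (x / 2) ^ (2 * m) / (Nat.factorial m : ℝ) ^ 2

open scoped Nat

noncomputable def besselSeries (w : ℝ) : ℝ :=
  ∑' m : ℕ, w ^ m / (m ! : ℝ) ^ 2

theorem besselJ0_eq_besselSeries (x : ℝ) : besselJ0 x = besselSeries (-(x / 2) ^ 2) := by
  refine tsum_congr fun m => ?_
  rw [neg_pow ((x / 2) ^ 2), ← pow_mul, mul_comm 2 m]

theorem besselI0_eq_besselSeries (x : ℝ) : besselI0 x = besselSeries ((x / 2) ^ 2) := by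
  refine tsum_congr fun m => ?_
  rw [← pow_mul, mul_comm 2 m]

theorem summable_pow_div_factorial_sq (w : ℝ) :
    Summable fun m : ℕ => w ^ m / (m ! : ℝ) ^ 2 := by
  refine (Real.summable_pow_div_factorial |w|).of_norm_bounded fun m => ?_
  have hm : (1 : ℝ) ≤ m ! := mod_cast Nat.one_le_iff_ne_zero.mpr m.factorial_ne_zero
  rw [norm_div, norm_pow, Real.norm_eq_abs, norm_pow, Real.norm_natCast]
  gcongr
  nlinarith

theorem Nat.sum_range_choose_mul_choose (m n : ℕ) :
    ∑ k ∈ Finset.range (n + 1), m.choose k * n.choose k = (m + n).choose m := by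
  rw [Nat.choose_symm_add, Nat.add_choose_eq, Finset.Nat.sum_antidiagonal_eq_sum_range_succ_mk]
  refine Finset.sum_congr rfl fun k hk => ?_
  rw [Nat.choose_symm (Finset.mem_range_succ_iff.mp hk)]

theorem hasSum_besselSeries_mul_exp_mul_exp (s t : ℝ) :
    HasSum (fun r : ℕ × ℕ × ℕ =>
      (s * t) ^ r.1 / (r.1 ! : ℝ) ^ 2 * (s ^ r.2.1 / r.2.1 ! * (t ^ r.2.2 / r.2.2 !)))
      (besselSeries (s * t) * (exp s * exp t)) := by
  have hexp (r : ℝ) : HasSum (fun n : ℕ => r ^ n / n !) (exp r) := by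
    simpa [Real.exp_eq_exp_ℝ] using NormedSpace.expSeries_div_hasSum_exp r
  have hf := (summable_pow_div_factorial_sq (s * t)).norm
  have hg := (hexp s).summable.norm
  have hh := (hexp t).summable.norm
  have hgh := hg.mul_norm hh
  rw [← (hexp s).tsum_eq, ← (hexp t).tsum_eq, tsum_mul_tsum_of_summable_norm hg hh,
    besselSeries, tsum_mul_tsum_of_summable_norm hf hgh]
  exact (hf.mul_norm hgh).of_norm.hasSum

theorem hasSum_choose_mul_pow_div_factorial (s t : ℝ) :
    HasSum (fun p : ℕ × ℕ => ((p.1 + p.2).choose p.1 : ℝ) * s ^ p.1 * t ^ p.2 / (p.1 ! * p.2 !))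
      (exp (s + t) * besselSeries (s * t)) := by
  -- collect the terms of the triple product with `(m, n) = (k + i, k + j)`
  set e : ℕ × ℕ × ℕ → (ℕ × ℕ) × ℕ := fun r => ((r.1 + r.2.1, r.1 + r.2.2), r.1)
  have he : e.Injective := by
    rintro ⟨k, i, j⟩ ⟨k', i', j'⟩ h
    simp only [e, Prod.mk.injEq] at h ⊢
    omega
  set H : (ℕ × ℕ) × ℕ → ℝ := fun z =>
    s ^ z.1.1 * t ^ z.1.2 * (z.1.1.choose z.2 * z.1.2.choose z.2) / (z.1.1 ! * z.1.2 !)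
  have hHe : H ∘ e = fun r : ℕ × ℕ × ℕ =>
      (s * t) ^ r.1 / (r.1 ! : ℝ) ^ 2 * (s ^ r.2.1 / r.2.1 ! * (t ^ r.2.2 / r.2.2 !)) := by
    ext ⟨k, i, j⟩
    simp only [Function.comp, H, e, Nat.cast_add_choose]
    field_simp
    ring
  have hsupp : ∀ z ∉ Set.range e, H z = 0 := by
    rintro ⟨⟨m, n⟩, k⟩ hz
    have : m < k ∨ n < k := by
      by_contra! h
      exact hz ⟨(k, m - k, n - k), by simp only [e]; congr <;> omega⟩
    rcases this with h | h <;> simp [H, Nat.choose_eq_zero_of_lt h]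
  have hfiber (p : ℕ × ℕ) : HasSum (fun k => H (p, k))
      (((p.1 + p.2).choose p.1 : ℝ) * s ^ p.1 * t ^ p.2 / (p.1 ! * p.2 !)) := by
    have hvanish : ∀ k ∉ Finset.range (p.2 + 1), H (p, k) = 0 := fun k hk => by
      simp [H, Nat.choose_eq_zero_of_lt (by simpa using hk : p.2 < k)]
    convert (hasSum_sum_of_ne_finset_zero hvanish : HasSum _ _) using 1
    simp only [H, ← Finset.sum_div, ← Finset.mul_sum]
    rw [← Nat.sum_range_choose_mul_choose]
    push_cast
    ring
  rw [exp_add, mul_comm]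
  have hprod := hasSum_besselSeries_mul_exp_mul_exp s t
  exact ((he.hasSum_iff hsupp).mp (hHe ▸ hprod)).prod_fiberwise hfiber

theorem integral_Ioi_pow_mul_exp_neg_mul_sq {b : ℝ} (hb : 0 < b) (k : ℕ) :
    ∫ x in Ioi (0 : ℝ), x ^ (2 * k + 1) * exp (-b * x ^ 2) = k ! / (2 * b ^ (k + 1)) := by
  have h := integral_rpow_mul_exp_neg_mul_rpow (q := (2 * k + 1 : ℕ)) two_pos
    (by linarith [(Nat.cast_nonneg _ : (0 : ℝ) ≤ (2 * k + 1 : ℕ))]) hb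
  have hexp : ((2 * k + 1 : ℕ) + 1 : ℝ) / 2 = k + 1 := by push_cast; ring
  rw [neg_div, hexp, Real.Gamma_nat_eq_factorial, rpow_neg hb.le, ← Nat.cast_succ,
    rpow_natCast] at h
  simp_rw [rpow_natCast, rpow_two] at h
  rw [h]
  field_simp

noncomputable def besselProductTerm (b s t : ℝ) (p : ℕ × ℕ) (x : ℝ) : ℝ :=
  s ^ p.1 * t ^ p.2 / ((p.1 ! : ℝ) ^ 2 * (p.2 ! : ℝ) ^ 2) *
    (x ^ (2 * (p.1 + p.2) + 1) * exp (-b * x ^ 2))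

section besselProductTerm

variable (b s t : ℝ)

theorem hasSum_besselProductTerm (x : ℝ) :
    HasSum (fun p => besselProductTerm b s t p x)
      (x * exp (-b * x ^ 2) * besselSeries (s * x ^ 2) * besselSeries (t * x ^ 2)) := by
  have hs := (summable_pow_div_factorial_sq (s * x ^ 2)).norm
  have ht := (summable_pow_div_factorial_sq (t * x ^ 2)).norm
  rw [mul_assoc, besselSeries, besselSeries, tsum_mul_tsum_of_summable_norm hs ht]
  have hterm (p : ℕ × ℕ) : besselProductTerm b s t p x = x * exp (-b * x ^ 2) *
      ((s * x ^ 2) ^ p.1 / (p.1 ! : ℝ) ^ 2 * ((t * x ^ 2) ^ p.2 / (p.2 ! : ℝ) ^ 2)) := by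
    simp only [besselProductTerm]
    ring
  simp only [hterm]
  exact (hs.mul_norm ht).of_norm.hasSum.mul_left _

theorem integral_besselProductTerm (hb : 0 < b) (p : ℕ × ℕ) :
    ∫ x in Ioi (0 : ℝ), besselProductTerm b s t p x =
      ((p.1 + p.2).choose p.1 : ℝ) * (s / b) ^ p.1 * (t / b) ^ p.2 / (p.1 ! * p.2 !) / (2 * b) := by
  simp only [besselProductTerm]
  rw [integral_const_mul, integral_Ioi_pow_mul_exp_neg_mul_sq hb, Nat.cast_add_choose, div_pow,
    div_pow]
  field_simp
  ring

theorem integrable_besselProductTerm (hb : 0 < b) (p : ℕ × ℕ) :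
    Integrable (besselProductTerm b s t p) := by
  have h := integrable_rpow_mul_exp_neg_mul_sq hb (s := (2 * (p.1 + p.2) + 1 : ℕ))
    (by linarith [(Nat.cast_nonneg _ : (0 : ℝ) ≤ (2 * (p.1 + p.2) + 1 : ℕ))])
  simp only [rpow_natCast] at h
  exact h.const_mul _

theorem norm_besselProductTerm {x : ℝ} (hx : 0 < x) (p : ℕ × ℕ) :
    ‖besselProductTerm b s t p x‖ = besselProductTerm b |s| |t| p x := by
  simp only [besselProductTerm, Real.norm_eq_abs, abs_mul, abs_div, abs_pow, Nat.abs_cast,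
    abs_of_pos hx, abs_of_pos (exp_pos _)]

end besselProductTerm

theorem integral_mul_exp_neg_mul_sq_mul_besselSeries_mul_besselSeries {b : ℝ} (hb : 0 < b)
    (s t : ℝ) :
    ∫ x in Ioi (0 : ℝ), x * exp (-b * x ^ 2) * besselSeries (s * x ^ 2) * besselSeries (t * x ^ 2)
      = exp ((s + t) / b) * besselSeries (s * t / b ^ 2) / (2 * b) := by
  have hnorm : Summable fun p => ∫ x in Ioi (0 : ℝ), ‖besselProductTerm b s t p x‖ := by
    refine ((hasSum_choose_mul_pow_div_factorial (|s| / b) (|t| / b)).div_const (2 * b)).summable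
      |>.congr fun p => ?_
    rw [setIntegral_congr_fun measurableSet_Ioi fun x hx => norm_besselProductTerm b s t hx p,
      integral_besselProductTerm b _ _ hb]
  have hsum := hasSum_integral_of_summable_integral_norm
    (fun p => (integrable_besselProductTerm b s t hb p).restrict) hnorm
  have hpt (x : ℝ) := (hasSum_besselProductTerm b s t x).tsum_eq
  simp only [integral_besselProductTerm b s t hb, hpt] at hsum
  refine hsum.unique ?_
  rw [add_div, show s * t / b ^ 2 = s / b * (t / b) by ring]
  exact (hasSum_choose_mul_pow_div_factorial (s / b) (t / b)).div_const (2 * b)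

theorem weber_second_exponential_integral_general (a c q : ℝ) (ha : 0 < a) :
    ∫ x in Ioi (0 : ℝ), x * Real.exp (-a ^ 2 * x ^ 2) * besselJ0 (c * x) * besselJ0 (q * x)
      = 1 / (2 * a ^ 2) * Real.exp (-(q ^ 2 + c ^ 2) / (4 * a ^ 2))
          * besselI0 (q * c / (2 * a ^ 2)) := by
  have hJ (r x : ℝ) : besselJ0 (r * x) = besselSeries (-(r / 2) ^ 2 * x ^ 2) := by
    rw [besselJ0_eq_besselSeries]
    ring_nf
  simp only [hJ]
  rw [integral_mul_exp_neg_mul_sq_mul_besselSeries_mul_besselSeries (by positivity),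
    besselI0_eq_besselSeries]
  have hexp : (-(c / 2) ^ 2 + -(q / 2) ^ 2) / a ^ 2 = -(q ^ 2 + c ^ 2) / (4 * a ^ 2) := by
    field_simp
    ring
  have hprod : -(c / 2) ^ 2 * -(q / 2) ^ 2 / (a ^ 2) ^ 2 = (q * c / (2 * a ^ 2) / 2) ^ 2 := by
    field_simp
  rw [hexp, hprod]
  ring

/-- Weber's second exponential integral: for all real `a > 0`, `c > 0` and `q > 0`,
`∫_0^∞ x·e^{−a²x²}·J₀(c·x)·J₀(q·x) dx = (1/(2a²))·exp(−(q²+c²)/(4a²))·I₀(q·c/(2a²))`. -/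
theorem weber_second_exponential_integral (a c q : ℝ) (ha : 0 < a) (hc : 0 < c) (hq : 0 < q) :
    ∫ x in Ioi (0 : ℝ), x * Real.exp (-a ^ 2 * x ^ 2) * besselJ0 (c * x) * besselJ0 (q * x)
      = 1 / (2 * a ^ 2) * Real.exp (-(q ^ 2 + c ^ 2) / (4 * a ^ 2))
          * besselI0 (q * c / (2 * a ^ 2)) :=
  weber_second_exponential_integral_general a c q ha
end

section
/- For all real a > 0, c > 0 and q > 0, ∫_0^∞ [x/(x² + c²)]·e^{−a²x²}·J₀(q·x) dx = e^{(a c)²}·K₀(q·c) − (1/2)·e^{−q²/(4a²)}·∑_{p=0}^∞ (a·c)^{2p}·Ψ_p(q²/(4a²)), where for x > 0 and integer p ≥ 0, Ψ_p(x) = (1/p!)·∫_0^∞ e^{−x t}·t^p·(1+t)^{−(p+1)} dt (the Tricomi confluent hypergeometric function Ψ(p+1, 1; x)); the series on the right converges absolutely. -/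
open MeasureTheory Real Set

/-- The modified Bessel function of the second kind of order zero, defined for
`x > 0` by `K₀(x) = ∫_0^∞ e^{−x·cosh t} dt`. -/
noncomputable def besselK0 (x : ℝ) : ℝ :=
  ∫ t in Ioi (0 : ℝ), Real.exp (-x * Real.cosh t)

/-- The Tricomi confluent hypergeometric function `Ψ(p+1, 1; x)` for `x > 0`,
given by `Ψ_p(x) = (1/p!)·∫_0^∞ e^{−x t}·t^p·(1+t)^{−(p+1)} dt`. -/
noncomputable def tricomiPsi (p : ℕ) (x : ℝ) : ℝ :=
  1 / (Nat.factorial p : ℝ) * ∫ t in Ioi (0 : ℝ), Real.exp (-x * t) * t ^ p / (1 + t) ^ (p + 1)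

/-!
Writing `e^{-a²x²}/(x² + c²) = e^{a²c²} ∫_{a²}^∞ e^{-(x² + c²)u} du` and using the Gaussian Hankel
transform `∫_0^∞ x e^{-ux²} J₀(qx) dx = e^{-q²/4u}/(2u)` (integrate the series of `J₀` termwise),
Fubini turns the left-hand side into `(e^{a²c²}/2) ∫_{a²}^∞ e^{-c²u - q²/4u} du/u`.
Over `(0, ∞)` this integral is `2 K₀(qc)` (substitute `u = (q/2c) e^t`), and over `(0, a²)` the
substitution `u = a²/(1+t)` followed by expanding `e^{a²c² t/(1+t)}` produces the Tricomi series.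
-/

open scoped Nat

lemma Real.hasSum_pow_div_factorial (x : ℝ) : HasSum (fun n => x ^ n / n !) (Real.exp x) :=
  Real.exp_eq_exp_ℝ ▸ NormedSpace.expSeries_div_hasSum_exp x

lemma two_mul_factorial_le_four_pow_mul_factorial_sq (m : ℕ) : (2 * m)! ≤ 4 ^ m * m ! ^ 2 := by
  have h := Nat.choose_mul_factorial_mul_factorial (Nat.le_mul_of_pos_left m two_pos)
  rw [show 2 * m - m = m by omega, ← Nat.centralBinom_eq_two_mul_choose] at h
  rw [← h, sq, ← mul_assoc]
  gcongr
  exact Nat.centralBinom_le_four_pow m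

lemma abs_besselJ0_term (y : ℝ) (m : ℕ) :
    |(-1 : ℝ) ^ m * (y / 2) ^ (2 * m) / (m ! : ℝ) ^ 2| = (y ^ 2 / 4) ^ m / (m ! : ℝ) ^ 2 := by
  rw [pow_mul, abs_div, abs_mul, abs_pow, abs_neg, abs_one, one_pow, one_mul,
    abs_of_nonneg (by positivity), abs_of_nonneg (by positivity)]
  ring

lemma besselJ0_term_abs_le_cosh_term (y : ℝ) (m : ℕ) :
    |(-1 : ℝ) ^ m * (y / 2) ^ (2 * m) / (m ! : ℝ) ^ 2| ≤ y ^ (2 * m) / ((2 * m)! : ℝ) := by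
  rw [abs_besselJ0_term, pow_mul, div_pow, ← div_mul_eq_div_div, ← div_div, div_div]
  gcongr
  exact_mod_cast two_mul_factorial_le_four_pow_mul_factorial_sq m

lemma summable_besselJ0_term (y : ℝ) :
    Summable fun m : ℕ => (-1 : ℝ) ^ m * (y / 2) ^ (2 * m) / (m ! : ℝ) ^ 2 :=
  .of_norm_bounded (Real.hasSum_cosh y).summable (besselJ0_term_abs_le_cosh_term y)

lemma hasSum_besselJ0 (y : ℝ) :
    HasSum (fun m : ℕ => (-1 : ℝ) ^ m * (y / 2) ^ (2 * m) / (m ! : ℝ) ^ 2) (besselJ0 y) :=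
  (summable_besselJ0_term y).hasSum

lemma abs_besselJ0_le_cosh (y : ℝ) : |besselJ0 y| ≤ Real.cosh y := by
  rw [← (Real.hasSum_cosh y).tsum_eq]
  exact (norm_tsum_le_tsum_norm (summable_besselJ0_term y).norm).trans
    ((summable_besselJ0_term y).norm.tsum_le_tsum (besselJ0_term_abs_le_cosh_term y)
      (Real.hasSum_cosh y).summable)

lemma abs_besselJ0_le_exp_abs (y : ℝ) : |besselJ0 y| ≤ Real.exp |y| := by
  refine (abs_besselJ0_le_cosh y).trans ?_
  rw [← Real.cosh_abs, Real.cosh_eq]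
  linarith [Real.exp_le_exp.2 (neg_le_self (abs_nonneg y))]

@[fun_prop]
lemma measurable_besselJ0 : Measurable besselJ0 :=
  measurable_of_tendsto_metrizable (fun n => Finset.measurable_sum _ fun m _ => by fun_prop)
    (tendsto_pi_nhds.2 fun y => (hasSum_besselJ0 y).tendsto_sum_nat)

lemma integral_odd_pow_mul_exp_neg_mul_sq {b : ℝ} (hb : 0 < b) (m : ℕ) :
    ∫ x in Ioi (0 : ℝ), x ^ (2 * m + 1) * Real.exp (-b * x ^ 2) = m ! / (2 * b ^ (m + 1)) := by
  have h := integral_rpow_mul_exp_neg_mul_rpow (p := 2) (q := (2 * m + 1 : ℕ)) two_pos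
    (neg_one_lt_zero.trans_le (Nat.cast_nonneg _)) hb
  have hexp : ((2 * m + 1 : ℕ) + 1 : ℝ) / 2 = m + 1 := by push_cast; ring
  simp only [Real.rpow_natCast, Real.rpow_two] at h
  rw [h, neg_div, hexp, Real.Gamma_nat_eq_factorial, Real.rpow_neg hb.le,
    ← Nat.cast_add_one, Real.rpow_natCast]
  field_simp

lemma integral_tsum_mul_of_nonneg {α ι : Type*} [MeasurableSpace α] [Countable ι] {μ : Measure α}
    {c : ι → ℝ} {g : ι → α → ℝ} (hg_nonneg : ∀ i, 0 ≤ᵐ[μ] g i) (hg_int : ∀ i, Integrable (g i) μ)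
    (hsum : Summable fun i => |c i * ∫ a, g i a ∂μ|) :
    ∫ a, ∑' i, c i * g i a ∂μ = ∑' i, c i * ∫ a, g i a ∂μ := by
  have hnorm : ∀ i, ∫ a, ‖c i * g i a‖ ∂μ = |c i * ∫ a, g i a ∂μ| := fun i => by
    rw [abs_mul, abs_of_nonneg (integral_nonneg_of_ae (hg_nonneg i)), ← integral_const_mul]
    refine integral_congr_ae ((hg_nonneg i).mono fun a ha => ?_)
    change ‖c i * g i a‖ = |c i| * g i a
    rw [Real.norm_eq_abs, abs_mul, abs_of_nonneg ha]
  simp_rw [← integral_const_mul]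
  exact (integral_tsum_of_summable_integral_norm (fun i => (hg_int i).const_mul (c i))
    (by simpa only [hnorm] using hsum)).symm

lemma integral_mul_exp_neg_mul_sq_mul_besselJ0 {b : ℝ} (hb : 0 < b) (q : ℝ) :
    ∫ x in Ioi (0 : ℝ), x * Real.exp (-b * x ^ 2) * besselJ0 (q * x)
      = Real.exp (-(q ^ 2 / (4 * b))) / (2 * b) := by
  set c : ℕ → ℝ := fun m => (-1 : ℝ) ^ m * (q / 2) ^ (2 * m) / (m ! : ℝ) ^ 2
  set g : ℕ → ℝ → ℝ := fun m x => x ^ (2 * m + 1) * Real.exp (-b * x ^ 2)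
  have hseries : ∀ x, x * Real.exp (-b * x ^ 2) * besselJ0 (q * x) = ∑' m, c m * g m x :=
    fun x => by
      rw [((hasSum_besselJ0 (q * x)).mul_left (x * Real.exp (-b * x ^ 2))).tsum_eq.symm]
      congr 1 with m
      simp only [c, g]
      ring
  have hg_nonneg : ∀ m, 0 ≤ᵐ[volume.restrict (Ioi 0)] g m := fun m =>
    ae_restrict_of_forall_mem measurableSet_Ioi fun x (hx : 0 < x) => by positivity
  have hg_int : ∀ m, IntegrableOn (g m) (Ioi 0) := fun m => by
    have h := integrableOn_rpow_mul_exp_neg_mul_sq hb (s := (2 * m + 1 : ℕ))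
      (neg_one_lt_zero.trans_le (Nat.cast_nonneg _))
    simp only [Real.rpow_natCast] at h
    simpa [g] using h
  have hterm : ∀ m, c m * ∫ x in Ioi (0 : ℝ), g m x
      = 1 / (2 * b) * ((-(q ^ 2 / (4 * b))) ^ m / m !) := fun m => by
    simp only [c, g, integral_odd_pow_mul_exp_neg_mul_sq hb]
    rw [pow_mul, neg_pow (q ^ 2 / (4 * b)), div_pow, div_pow, div_pow, mul_pow]
    field_simp
    ring
  have hexp := (Real.hasSum_pow_div_factorial (-(q ^ 2 / (4 * b)))).mul_left (1 / (2 * b))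
  simp_rw [hseries]
  rw [integral_tsum_mul_of_nonneg hg_nonneg hg_int
    (by simpa only [hterm] using hexp.summable.abs)]
  simp only [hterm, hexp.tsum_eq]
  ring

lemma abs_mul_exp_neg_mul_sq_mul_besselJ0_le {b : ℝ} (hb : 0 < b) (q x : ℝ) :
    |x * Real.exp (-b * x ^ 2) * besselJ0 (q * x)|
      ≤ Real.exp (q ^ 2 / (2 * b)) * ‖x * Real.exp (-(b / 2) * x ^ 2)‖ := by
  have hquad : -b * x ^ 2 + |q * x| ≤ q ^ 2 / (2 * b) + -(b / 2) * x ^ 2 := by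
    have hsq : q ^ 2 / (2 * b) + -(b / 2) * x ^ 2 - (-b * x ^ 2 + |q * x|)
        = (b * |x| - |q|) ^ 2 / (2 * b) := by
      rw [abs_mul, ← sq_abs q, ← sq_abs x]
      field_simp
      ring
    linarith [show 0 ≤ (b * |x| - |q|) ^ 2 / (2 * b) by positivity]
  calc |x * Real.exp (-b * x ^ 2) * besselJ0 (q * x)|
      = |x| * (Real.exp (-b * x ^ 2) * |besselJ0 (q * x)|) := by
        rw [abs_mul, abs_mul, Real.abs_exp, mul_assoc]
    _ ≤ |x| * (Real.exp (-b * x ^ 2) * Real.exp |q * x|) := by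
        gcongr
        exact abs_besselJ0_le_exp_abs _
    _ ≤ |x| * (Real.exp (q ^ 2 / (2 * b)) * Real.exp (-(b / 2) * x ^ 2)) := by
        rw [← Real.exp_add, ← Real.exp_add]
        gcongr
    _ = _ := by
        rw [Real.norm_eq_abs, abs_mul, Real.abs_exp]
        ring

lemma integrable_div_sq_add_mul_exp_neg_mul_sq_mul_besselJ0 {b γ : ℝ} (hb : 0 < b) (hγ : 0 < γ)
    (q : ℝ) :
    Integrable fun x : ℝ => x / (x ^ 2 + γ) * Real.exp (-b * x ^ 2) * besselJ0 (q * x) := by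
  refine Integrable.mono'
    (((integrable_mul_exp_neg_mul_sq (half_pos hb)).norm.const_mul
      (Real.exp (q ^ 2 / (2 * b)))).div_const γ) (by fun_prop) (.of_forall fun x => ?_)
  have hγx : γ ≤ x ^ 2 + γ := by nlinarith
  calc ‖x / (x ^ 2 + γ) * Real.exp (-b * x ^ 2) * besselJ0 (q * x)‖
      = |x * Real.exp (-b * x ^ 2) * besselJ0 (q * x)| / (x ^ 2 + γ) := by
        rw [Real.norm_eq_abs, div_mul_eq_mul_div, div_mul_eq_mul_div, abs_div,
          abs_of_pos (by positivity : 0 < x ^ 2 + γ)]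
    _ ≤ |x * Real.exp (-b * x ^ 2) * besselJ0 (q * x)| / γ := by gcongr
    _ ≤ _ := by gcongr; exact abs_mul_exp_neg_mul_sq_mul_besselJ0_le hb q x

lemma integral_exp_neg_mul_Ioi {k : ℝ} (hk : 0 < k) (b : ℝ) :
    ∫ u in Ioi b, Real.exp (-k * u) = Real.exp (-k * b) / k := by
  rw [integral_exp_mul_Ioi (neg_neg_of_pos hk), neg_div_neg_eq]

lemma integral_div_sq_add_mul_exp_neg_mul_sq_mul_besselJ0 {b γ : ℝ} (hb : 0 < b) (hγ : 0 < γ)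
    (q : ℝ) :
    ∫ x in Ioi (0 : ℝ), x / (x ^ 2 + γ) * Real.exp (-b * x ^ 2) * besselJ0 (q * x)
      = Real.exp (γ * b) / 2 * ∫ u in Ioi b, Real.exp (-(γ * u) - q ^ 2 / 4 / u) / u := by
  set h : ℝ → ℝ := fun x => x / (x ^ 2 + γ) * Real.exp (-b * x ^ 2) * besselJ0 (q * x)
  set f : ℝ → ℝ → ℝ := fun x u => x * besselJ0 (q * x) * Real.exp (-(x ^ 2 + γ) * u)
  have hinner : ∀ x, ∫ u in Ioi b, f x u = Real.exp (-(γ * b)) * h x := fun x => by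
    simp only [f, h]
    rw [integral_const_mul, integral_exp_neg_mul_Ioi (by positivity),
      show -(x ^ 2 + γ) * b = -(γ * b) + -b * x ^ 2 by ring, Real.exp_add]
    ring
  have hinner_norm : ∀ x, ∫ u in Ioi b, ‖f x u‖ = ‖Real.exp (-(γ * b)) * h x‖ := fun x => by
    have hx : 0 < x ^ 2 + γ := by positivity
    rw [← hinner]
    simp only [f, Real.norm_eq_abs, abs_mul, Real.abs_exp, integral_const_mul,
      integral_exp_neg_mul_Ioi hx, abs_div, abs_of_pos hx]
  have houter : ∀ u ∈ Ioi b,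
      ∫ x in Ioi (0 : ℝ), f x u = 1 / 2 * (Real.exp (-(γ * u) - q ^ 2 / 4 / u) / u) := by
    intro u (hu : b < u)
    have hu0 : 0 < u := hb.trans hu
    have hsplit : ∀ x, f x u
        = Real.exp (-(γ * u)) * (x * Real.exp (-u * x ^ 2) * besselJ0 (q * x)) := fun x => by
      simp only [f]
      rw [show -(x ^ 2 + γ) * u = -(γ * u) + -u * x ^ 2 by ring, Real.exp_add]
      ring
    simp_rw [hsplit]
    rw [integral_const_mul, integral_mul_exp_neg_mul_sq_mul_besselJ0 hu0,
      show -(γ * u) - q ^ 2 / 4 / u = -(γ * u) + -(q ^ 2 / (4 * u)) by ring, Real.exp_add]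
    field_simp
  have hint : Integrable (Function.uncurry f)
      ((volume.restrict (Ioi 0)).prod (volume.restrict (Ioi b))) := by
    have hmeas : Measurable (Function.uncurry f) := by
      change Measurable fun p : ℝ × ℝ => p.1 * besselJ0 (q * p.1) * Real.exp (-(p.1 ^ 2 + γ) * p.2)
      fun_prop
    refine (integrable_prod_iff hmeas.aestronglyMeasurable).2 ⟨.of_forall fun x => ?_, ?_⟩
    · exact (exp_neg_integrableOn_Ioi b (by positivity : 0 < x ^ 2 + γ)).const_mul
        (x * besselJ0 (q * x))
    · simp only [Function.uncurry_apply_pair, hinner_norm]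
      exact ((integrable_div_sq_add_mul_exp_neg_mul_sq_mul_besselJ0 hb hγ q).const_mul
        _).norm.restrict
  calc ∫ x in Ioi (0 : ℝ), h x
      = ∫ x in Ioi (0 : ℝ), Real.exp (γ * b) * ∫ u in Ioi b, f x u := by
        simp_rw [hinner, ← mul_assoc, ← Real.exp_add, add_neg_cancel, Real.exp_zero, one_mul]
    _ = Real.exp (γ * b) * ∫ u in Ioi b, ∫ x in Ioi (0 : ℝ), f x u := by
        rw [integral_const_mul, integral_integral_swap hint]
    _ = _ := by
        rw [setIntegral_congr_fun measurableSet_Ioi houter, integral_const_mul]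
        ring

lemma integral_Ioi_div_eq_integral_comp_exp (g : ℝ → ℝ) :
    ∫ u in Ioi (0 : ℝ), g u / u = ∫ t, g (Real.exp t) := by
  rw [← Real.range_exp, ← image_univ, integral_image_eq_integral_abs_deriv_smul MeasurableSet.univ
    (fun t _ => (Real.hasDerivAt_exp t).hasDerivWithinAt) Real.exp_injective.injOn,
    Measure.restrict_univ]
  congr 1 with t
  rw [smul_eq_mul, abs_of_pos (Real.exp_pos t), mul_div_cancel₀ _ (Real.exp_pos t).ne']

lemma integral_Ioi_comp_mul_div (g : ℝ → ℝ) {r : ℝ} (hr : 0 < r) :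
    ∫ u in Ioi (0 : ℝ), g (r * u) / u = ∫ u in Ioi (0 : ℝ), g u / u := by
  simp_rw [integral_Ioi_div_eq_integral_comp_exp]
  conv_lhs => enter [2, t]; rw [← Real.exp_log hr, ← Real.exp_add, add_comm]
  exact integral_add_right_eq_self (fun t => g (Real.exp t)) (Real.log r)

lemma besselK0_eq_half_integral (z : ℝ) :
    besselK0 z = 1 / 2 * ∫ u in Ioi (0 : ℝ), Real.exp (-(z / 2 * u) - z / 2 / u) / u := by
  have hcosh : ∀ t, -(z / 2 * Real.exp t) - z / 2 / Real.exp t = -z * Real.cosh |t| := fun t => by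
    rw [Real.cosh_abs, Real.cosh_eq, Real.exp_neg]
    field_simp
    ring
  rw [integral_Ioi_div_eq_integral_comp_exp (fun u => Real.exp (-(z / 2 * u) - z / 2 / u))]
  simp_rw [hcosh]
  rw [integral_comp_abs (f := fun t => Real.exp (-z * Real.cosh t)), besselK0]
  ring

lemma integral_exp_neg_mul_sub_div_div {α β : ℝ} (hα : 0 < α) (hβ : 0 < β) :
    ∫ u in Ioi (0 : ℝ), Real.exp (-(α * u) - β / u) / u = 2 * besselK0 (2 * √(α * β)) := by
  set s := √(α * β)
  have hs : 0 < s := Real.sqrt_pos.2 (mul_pos hα hβ)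
  have hss : s ^ 2 = α * β := Real.sq_sqrt (mul_pos hα hβ).le
  rw [besselK0_eq_half_integral, ← integral_Ioi_comp_mul_div _ (div_pos hs hα)]
  have hscale : ∀ u, Real.exp (-(2 * s / 2 * u) - 2 * s / 2 / u)
      = Real.exp (-(α * (s / α * u)) - β / (s / α * u)) := fun u => by
    congr 1
    field_simp
    rw [← hss]
    ring
  simp_rw [hscale]
  ring

lemma integrableOn_exp_neg_mul_sub_div_div {α β : ℝ} (hα : 0 < α) (hβ : 0 < β) :
    IntegrableOn (fun u => Real.exp (-(α * u) - β / u) / u) (Ioi 0) := by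
  refine Integrable.mono' ((exp_neg_integrableOn_Ioi 0 hα).const_mul β⁻¹)
    (Measurable.aestronglyMeasurable (by fun_prop))
    ((ae_restrict_iff' measurableSet_Ioi).2 (.of_forall fun u (hu : 0 < u) => ?_))
  have hexp : β / u * Real.exp (-(β / u)) ≤ 1 := by
    have := Real.add_one_le_exp (β / u)
    rw [Real.exp_neg, ← div_eq_mul_inv, div_le_one (Real.exp_pos _)]
    linarith
  rw [Real.norm_eq_abs, abs_of_nonneg (by positivity), sub_eq_add_neg, Real.exp_add,
    div_le_iff₀ hu]
  calc Real.exp (-(α * u)) * Real.exp (-(β / u))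
      = β⁻¹ * Real.exp (-(α * u)) * u * (β / u * Real.exp (-(β / u))) := by field_simp
    _ ≤ β⁻¹ * Real.exp (-α * u) * u := by
      rw [neg_mul]
      exact mul_le_of_le_one_right (by positivity) hexp

lemma integral_Ioc_div_eq_integral_comp_div_one_add (g : ℝ → ℝ) {A : ℝ} (hA : 0 < A) :
    ∫ u in Ioc 0 A, g u / u = ∫ t in Ioi (0 : ℝ), g (A / (1 + t)) / (1 + t) := by
  have himage : (fun t => A / (1 + t)) '' Ioi 0 = Ioo 0 A := by
    ext u
    constructor
    · rintro ⟨t, ht : 0 < t, rfl⟩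
      exact ⟨by positivity, div_lt_self hA (by linarith)⟩
    · rintro ⟨hu0, huA⟩
      refine ⟨A / u - 1, by simpa using (one_lt_div hu0).2 huA, ?_⟩
      simp only [add_sub_cancel, div_div_cancel₀ hA.ne']
  have hderiv : ∀ t ∈ Ioi (0 : ℝ),
      HasDerivWithinAt (fun t => A / (1 + t)) (-(A / (1 + t) ^ 2)) (Ioi 0) t := by
    intro t (ht : 0 < t)
    exact (((hasDerivAt_id' t).const_add 1).fun_inv (by linarith) |>.const_mul A
      |>.congr_deriv (by ring)).hasDerivWithinAt
  have hinj : InjOn (fun t => A / (1 + t)) (Ioi 0) := by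
    intro s (hs : 0 < s) t (ht : 0 < t) h
    field_simp at h
    linarith
  rw [integral_Ioc_eq_integral_Ioo, ← himage,
    integral_image_eq_integral_abs_deriv_smul measurableSet_Ioi hderiv hinj]
  refine setIntegral_congr_fun measurableSet_Ioi fun t (ht : 0 < t) => ?_
  rw [smul_eq_mul, abs_neg, abs_of_pos (by positivity)]
  field_simp

section TricomiPsi

variable {x : ℝ} (p : ℕ)

lemma tricomiPsi_integrand_le {t : ℝ} (ht : 0 ≤ t) :
    Real.exp (-x * t) * t ^ p / (1 + t) ^ (p + 1) ≤ Real.exp (-x * t) := by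
  have hpow : t ^ p ≤ (1 + t) ^ (p + 1) :=
    calc t ^ p ≤ (1 + t) ^ p := by gcongr; linarith
      _ ≤ (1 + t) ^ (p + 1) := pow_le_pow_right₀ (by linarith) p.le_succ
  rw [div_le_iff₀ (by positivity)]
  exact mul_le_mul_of_nonneg_left hpow (Real.exp_pos _).le

lemma integrableOn_tricomiPsi_integrand (hx : 0 < x) :
    IntegrableOn (fun t => Real.exp (-x * t) * t ^ p / (1 + t) ^ (p + 1)) (Ioi 0) :=
  Integrable.mono' (exp_neg_integrableOn_Ioi 0 hx) (Measurable.aestronglyMeasurable (by fun_prop))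
    ((ae_restrict_iff' measurableSet_Ioi).2 (.of_forall fun t (ht : 0 < t) => by
      rw [Real.norm_of_nonneg (by positivity)]
      exact tricomiPsi_integrand_le p ht.le))

lemma tricomiPsi_nonneg : 0 ≤ tricomiPsi p x :=
  mul_nonneg (by positivity) (setIntegral_nonneg measurableSet_Ioi fun t (ht : 0 < t) => by
    positivity)

lemma tricomiPsi_le (hx : 0 < x) : tricomiPsi p x ≤ 1 / p ! * (1 / x) := by
  refine mul_le_mul_of_nonneg_left ?_ (by positivity)
  calc ∫ t in Ioi (0 : ℝ), Real.exp (-x * t) * t ^ p / (1 + t) ^ (p + 1)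
      ≤ ∫ t in Ioi (0 : ℝ), Real.exp (-x * t) :=
        setIntegral_mono_on (integrableOn_tricomiPsi_integrand p hx) (exp_neg_integrableOn_Ioi 0 hx)
          measurableSet_Ioi fun t (ht : 0 < t) => tricomiPsi_integrand_le p ht.le
    _ = 1 / x := by rw [integral_exp_neg_mul_Ioi hx, mul_zero, Real.exp_zero]

lemma summable_abs_pow_mul_tricomiPsi (A : ℝ) (hx : 0 < x) :
    Summable fun p => |A ^ p * tricomiPsi p x| := by
  refine ((Real.summable_pow_div_factorial |A|).mul_right (1 / x)).of_nonneg_of_le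
    (fun p => abs_nonneg _) fun p => ?_
  rw [abs_mul, abs_pow, abs_of_nonneg (tricomiPsi_nonneg p), div_eq_mul_one_div _ (p ! : ℝ),
    mul_assoc]
  exact mul_le_mul_of_nonneg_left (tricomiPsi_le p hx) (by positivity)

end TricomiPsi

lemma integral_Ioc_exp_neg_mul_sub_div_div {A β : ℝ} (hA : 0 < A) (hβ : 0 < β) (α : ℝ) :
    ∫ u in Ioc 0 A, Real.exp (-(α * u) - β / u) / u
      = Real.exp (-(α * A) - β / A) * ∑' p, (α * A) ^ p * tricomiPsi p (β / A) := by
  set x := β / A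
  have hx : 0 < x := div_pos hβ hA
  set g : ℕ → ℝ → ℝ := fun p t => 1 / p ! * (Real.exp (-x * t) * t ^ p / (1 + t) ^ (p + 1))
  have hseries : ∀ t ∈ Ioi (0 : ℝ),
      Real.exp (-(α * (A / (1 + t))) - β / (A / (1 + t))) / (1 + t)
        = Real.exp (-(α * A) - x) * ∑' p, (α * A) ^ p * g p t := by
    intro t (ht : 0 < t)
    have h1t : 1 + t ≠ 0 := by positivity
    have hsum : HasSum (fun p => (α * A) ^ p * g p t)
        (Real.exp (-x * t) / (1 + t) * Real.exp (α * A * t / (1 + t))) := by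
      refine ((Real.hasSum_pow_div_factorial (α * A * t / (1 + t))).mul_left
        (Real.exp (-x * t) / (1 + t))).congr_fun fun p => ?_
      simp only [g]
      rw [div_pow, pow_succ]
      field_simp
      ring
    have hexponent : -(α * (A / (1 + t))) - β / (A / (1 + t))
        = (-(α * A) - x) + -x * t + α * A * t / (1 + t) := by
      simp only [x]
      field_simp
      ring
    rw [hsum.tsum_eq, hexponent, Real.exp_add, Real.exp_add]
    ring
  have hg_nonneg : ∀ p, 0 ≤ᵐ[volume.restrict (Ioi 0)] g p := fun p =>
    ae_restrict_of_forall_mem measurableSet_Ioi fun t (ht : 0 < t) => by positivity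
  have hg_int : ∀ p, IntegrableOn (g p) (Ioi 0) := fun p =>
    (integrableOn_tricomiPsi_integrand p hx).const_mul _
  have hg_integral : ∀ p, ∫ t in Ioi (0 : ℝ), g p t = tricomiPsi p x := fun p =>
    integral_const_mul _ _
  rw [integral_Ioc_div_eq_integral_comp_div_one_add (fun u => Real.exp (-(α * u) - β / u)) hA,
    setIntegral_congr_fun measurableSet_Ioi hseries, integral_const_mul,
    integral_tsum_mul_of_nonneg hg_nonneg hg_int
      (by simpa only [hg_integral] using summable_abs_pow_mul_tricomiPsi (α * A) hx)]
  simp only [hg_integral]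

/-- For all real `a > 0`, `c > 0` and `q > 0`,
`∫_0^∞ [x/(x²+c²)]·e^{−a²x²}·J₀(q·x) dx
  = e^{(ac)²}·K₀(q·c) − (1/2)·e^{−q²/(4a²)}·∑_{p=0}^∞ (a·c)^{2p}·Ψ_p(q²/(4a²))`,
the series converging absolutely. -/
theorem hankel_gaussian_over_quadratic (a c q : ℝ) (ha : 0 < a) (hc : 0 < c) (hq : 0 < q) :
    Summable (fun p : ℕ => |(a * c) ^ (2 * p) * tricomiPsi p (q ^ 2 / (4 * a ^ 2))|) ∧
    ∫ x in Ioi (0 : ℝ), x / (x ^ 2 + c ^ 2) * Real.exp (-a ^ 2 * x ^ 2) * besselJ0 (q * x)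
      = Real.exp ((a * c) ^ 2) * besselK0 (q * c)
        - 1 / 2 * Real.exp (-q ^ 2 / (4 * a ^ 2))
            * ∑' p : ℕ, (a * c) ^ (2 * p) * tricomiPsi p (q ^ 2 / (4 * a ^ 2)) := by
  have ha2 : 0 < a ^ 2 := by positivity
  have hc2 : 0 < c ^ 2 := by positivity
  have hq2 : 0 < q ^ 2 / 4 := by positivity
  have hx : q ^ 2 / 4 / a ^ 2 = q ^ 2 / (4 * a ^ 2) := div_div _ _ _
  have hcoeff : ∀ p : ℕ, (a * c) ^ (2 * p) = (c ^ 2 * a ^ 2) ^ p := fun p => by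
    rw [pow_mul]
    ring
  refine ⟨?_, ?_⟩
  · simpa only [hcoeff, hx] using summable_abs_pow_mul_tricomiPsi (c ^ 2 * a ^ 2) (div_pos hq2 ha2)
  have hK : besselK0 (q * c)
      = 1 / 2 * ∫ u in Ioi (0 : ℝ), Real.exp (-(c ^ 2 * u) - q ^ 2 / 4 / u) / u := by
    rw [integral_exp_neg_mul_sub_div_div hc2 hq2, show c ^ 2 * (q ^ 2 / 4) = (q * c / 2) ^ 2 by ring,
      Real.sqrt_sq (by positivity), mul_div_cancel₀ _ two_ne_zero]
    ring
  have hsplit := intervalIntegral.integral_Ioi_sub_Ioi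
    (integrableOn_exp_neg_mul_sub_div_div hc2 hq2) ha2.le
  rw [intervalIntegral.integral_of_le ha2.le,
    integral_Ioc_exp_neg_mul_sub_div_div ha2 hq2 (c ^ 2), hx] at hsplit
  have hexp : Real.exp (c ^ 2 * a ^ 2) * Real.exp (-(c ^ 2 * a ^ 2) - q ^ 2 / (4 * a ^ 2))
      = Real.exp (-q ^ 2 / (4 * a ^ 2)) := by
    rw [← Real.exp_add]
    congr 1
    ring
  simp only [hcoeff]
  rw [integral_div_sq_add_mul_exp_neg_mul_sq_mul_besselJ0 ha2 hc2, hK,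
    show (a * c) ^ 2 = c ^ 2 * a ^ 2 by ring]
  linear_combination (-(1 / 2) * ∑' p, (c ^ 2 * a ^ 2) ^ p * tricomiPsi p (q ^ 2 / (4 * a ^ 2)))
    * hexp - Real.exp (c ^ 2 * a ^ 2) / 2 * hsplit
end

section
/- Let a > 0 and c > 0 be real and let n ≥ 1 be an integer. Define the entire function G(z) = e^{−a²z} · ∑_{k=0}^∞ (−1)^k (c²/4)^{k+n} z^{k+n} / (k!·(k+2n)!) (i.e. G(z) = e^{−a²z}·J_{2n}(c√z)). Then G^{(m)}(0) = 0 for every integer m with 0 ≤ m ≤ n−1, and for every integer m ≥ n, G^{(m)}(0) = (−1)^m · (m!/(m+n)!) · a^{2m} · (−c²/(4a²))^n · L_{m−n}^{2n}(−c²/(4a²)), where L_j^{2n} denotes the generalized Laguerre polynomial; equivalently, G^{(m)}(0) = (−1)^{m+n} · a^{2m} · ∑_{p=n}^m m! / ((m−p)!·(p−n)!·(p+n)!) · (c²/(4a²))^p. -/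
/-!
`G` is the Cauchy product of the exponential series `∑ (-a²)^i z^i / i!` with the power series
of `J_{2n}(c√z)`, whose coefficients vanish below degree `n`. Hence `G^{(m)}(0)` is `m!` times
a finite sum over `p ∈ [n, m]`, which is empty for `m < n`; reindexing it by `p = n + k` and
writing `m! / ((m-p)! (p+n)!) = m!/(m+n)! · binom(m+n, m-p)` gives the Laguerre form.
-/

open Finset

/-- The generalized Laguerre polynomial
`L_j^α(z) = ∑_{k=0}^j binom(j+α, j−k)·(−z)^k/k!` (integer `α ≥ 0`). -/
noncomputable def genLaguerre (j : ℕ) (α : ℕ) (z : ℝ) : ℝ :=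
  ∑ k ∈ Finset.range (j + 1),
    (Nat.choose (j + α) (j - k) : ℝ) * (-z) ^ k / (Nat.factorial k : ℝ)

open Nat
open scoped NNReal

theorem iteratedDeriv_eq_factorial_mul_of_eqOn_tsum {𝕜 : Type*} [NontriviallyNormedField 𝕜]
    [CompleteSpace 𝕜] {C : ℕ → 𝕜} {G : 𝕜 → 𝕜} {r : ℝ≥0}
    (hr : 0 < r) (hC : Summable fun m ↦ ‖C m‖ * r ^ m)
    (hG : Set.EqOn G (fun z ↦ ∑' m, C m * z ^ m) (Metric.eball 0 r)) (m : ℕ) :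
    iteratedDeriv m G 0 = m ! * C m := by
  set p := FormalMultilinearSeries.ofScalars 𝕜 C
  have hrp : (r : ENNReal) ≤ p.radius :=
    p.le_radius_of_summable_norm (by simpa [p, FormalMultilinearSeries.ofScalars_norm] using hC)
  have hball : HasFPowerSeriesOnBall G p 0 r := by
    refine ((p.hasFPowerSeriesOnBall (lt_of_lt_of_le (by exact_mod_cast hr) hrp)).mono
      (by exact_mod_cast hr) hrp).congr fun z hz ↦ ?_
    rw [hG hz]
    exact (FormalMultilinearSeries.ofScalars_sum_eq C z).trans (by simp only [smul_eq_mul])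
  rw [iteratedDeriv_eq_iteratedFDeriv, ← hball.factorial_smul 1,
    FormalMultilinearSeries.ofScalars_apply_eq]
  simp

theorem tsum_mul_pow_mul_tsum_mul_pow {𝕜 : Type*} [NormedField 𝕜] [CompleteSpace 𝕜]
    {A B : ℕ → 𝕜} {z : 𝕜}
    (hA : Summable fun i ↦ ‖A i * z ^ i‖) (hB : Summable fun j ↦ ‖B j * z ^ j‖) :
    (∑' i, A i * z ^ i) * (∑' j, B j * z ^ j)
      = ∑' m, (∑ p ∈ antidiagonal m, A p.1 * B p.2) * z ^ m := by
  rw [tsum_mul_tsum_eq_tsum_sum_antidiagonal_of_summable_norm hA hB]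
  refine tsum_congr fun m ↦ ?_
  rw [sum_mul]
  refine sum_congr rfl fun p hp ↦ ?_
  rw [← mem_antidiagonal.1 hp, pow_add]
  ring

theorem summable_norm_pow_div_factorial_mul_pow (b z : ℂ) :
    Summable fun i ↦ ‖b ^ i / i ! * z ^ i‖ := by
  simpa only [mul_pow, div_mul_eq_mul_div] using NormedSpace.norm_expSeries_div_summable (b * z)

theorem cexp_mul_eq_tsum (b z : ℂ) : Complex.exp (b * z) = ∑' i, b ^ i / i ! * z ^ i := by
  rw [Complex.exp_eq_exp_ℂ, NormedSpace.exp_eq_tsum_div]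
  simp only [mul_pow, div_mul_eq_mul_div]

/-- The coefficient of `z ^ j` in
`J_{2n}(c √z) = ∑_k (-1)^k (c²/4)^(k+n) z^(k+n) / (k! (k+2n)!)`. -/
noncomputable def besselSqrtCoeff (n : ℕ) (c : ℂ) (j : ℕ) : ℂ :=
  if j < n then 0 else (-1) ^ (j - n) * (c ^ 2 / 4) ^ j / ((j - n)! * (j + n)!)

namespace besselSqrtCoeff

variable (n : ℕ) (c : ℂ)

theorem norm_mul_pow_le (z : ℂ) (j : ℕ) :
    ‖besselSqrtCoeff n c j * z ^ j‖
      ≤ ‖c ^ 2 / 4 * z‖ ^ n * (‖c ^ 2 / 4 * z‖ ^ (j - n) / (j - n)!) := by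
  unfold besselSqrtCoeff
  split_ifs with hj
  · simp only [zero_mul, norm_zero]; positivity
  obtain ⟨k, rfl⟩ : ∃ k, j = n + k := ⟨j - n, by omega⟩
  set ρ := ‖c ^ 2 / 4 * z‖
  have hnorm : ‖(-1) ^ (n + k - n) * (c ^ 2 / 4) ^ (n + k) / ((n + k - n)! * (n + k + n)!)
      * z ^ (n + k)‖ = ρ ^ (n + k) / (k ! * (n + k + n)!) := by
    simp only [add_tsub_cancel_left, Complex.norm_mul, Complex.norm_div, norm_pow, norm_neg,
      norm_one, one_pow, Complex.norm_ofNat, one_mul, RCLike.norm_natCast, mul_pow, ρ]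
    ring
  have hfac : (1 : ℝ) ≤ (n + k + n)! := by exact_mod_cast (n + k + n).factorial_pos
  rw [hnorm, Nat.add_sub_cancel_left, pow_add, mul_div_assoc]
  gcongr ρ ^ n * ?_
  exact div_le_div_of_nonneg_left (by positivity) (by positivity)
    (le_mul_of_one_le_right (by positivity) hfac)

theorem summable_norm_mul_pow (z : ℂ) : Summable fun j ↦ ‖besselSqrtCoeff n c j * z ^ j‖ := by
  refine .of_nonneg_of_le (fun _ ↦ norm_nonneg _) (norm_mul_pow_le n c z) ?_
  refine (summable_nat_add_iff n).1 ?_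
  simpa only [Nat.add_sub_cancel] using (Real.summable_pow_div_factorial _).mul_left _

theorem tsum_mul_pow (z : ℂ) :
    ∑' j, besselSqrtCoeff n c j * z ^ j
      = ∑' k : ℕ, (-1 : ℂ) ^ k * (c ^ 2 / 4) ^ (k + n) * z ^ (k + n)
          / ((k ! : ℂ) * ((k + 2 * n)! : ℂ)) := by
  rw [← (summable_norm_mul_pow n c z).of_norm.sum_add_tsum_nat_add n,
    sum_eq_zero fun j hj ↦ by simp [besselSqrtCoeff, mem_range.1 hj], zero_add]
  refine tsum_congr fun k ↦ ?_
  simp only [besselSqrtCoeff, show ¬ k + n < n by omega, if_false, Nat.add_sub_cancel,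
    show k + n + n = k + 2 * n by omega]
  ring

theorem sum_antidiagonal_mul (A : ℕ → ℂ) (m : ℕ) :
    ∑ p ∈ antidiagonal m, A p.1 * besselSqrtCoeff n c p.2
      = ∑ q ∈ Icc n m, A (m - q) * besselSqrtCoeff n c q := by
  rw [← Nat.sum_antidiagonal_swap, Nat.sum_antidiagonal_eq_sum_range_succ_mk]
  refine (sum_subset (fun q hq ↦ ?_) fun q hq hqn ↦ ?_).symm
  · simp only [mem_Icc, mem_range] at hq ⊢; omega
  · simp only [mem_Icc, mem_range, not_and, not_le] at hq hqn
    simp [besselSqrtCoeff, show q < n by omega]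

theorem factorial_mul_neg_sq_pow_div_mul (a : ℂ) (ha : a ≠ 0) {m q : ℕ} (hnq : n ≤ q)
    (hqm : q ≤ m) :
    m ! * ((-a ^ 2) ^ (m - q) / (m - q)! * besselSqrtCoeff n c q)
      = (-1) ^ (m + n) * a ^ (2 * m)
          * (m ! / ((m - q)! * (q - n)! * (q + n)!) * (c ^ 2 / (4 * a ^ 2)) ^ q) := by
  obtain ⟨s, rfl⟩ : ∃ s, m = q + s := ⟨m - q, by omega⟩
  obtain ⟨r, rfl⟩ : ∃ r, q = n + r := ⟨q - n, by omega⟩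
  simp only [besselSqrtCoeff, show ¬ n + r < n by omega, if_false, Nat.add_sub_cancel_left]
  have hsign : (-1 : ℂ) ^ (n + r + s + n) = (-1) ^ (s + r) := by
    rw [show n + r + s + n = 2 * n + (s + r) by ring, pow_add, pow_mul, neg_one_sq, one_pow,
      one_mul]
  rw [hsign, neg_pow, ← pow_mul, ← div_div (c ^ 2), div_pow (c ^ 2 / 4)]
  field_simp
  ring

end besselSqrtCoeff

theorem iteratedDeriv_cexp_mul_tsum_besselSqrt (b c : ℂ) (n m : ℕ) :
    iteratedDeriv m (fun z ↦ Complex.exp (b * z)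
        * ∑' k : ℕ, (-1 : ℂ) ^ k * (c ^ 2 / 4) ^ (k + n) * z ^ (k + n)
            / ((k ! : ℂ) * ((k + 2 * n)! : ℂ))) 0
      = m ! * ∑ q ∈ Icc n m, b ^ (m - q) / (m - q)! * besselSqrtCoeff n c q := by
  rw [← besselSqrtCoeff.sum_antidiagonal_mul n c (fun i ↦ b ^ i / i !)]
  refine iteratedDeriv_eq_factorial_mul_of_eqOn_tsum (r := 1)
    (C := fun m ↦ ∑ p ∈ antidiagonal m, b ^ p.1 / p.1 ! * besselSqrtCoeff n c p.2)
    one_pos ?_ (fun z _ ↦ ?_) m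
  · simpa using summable_norm_sum_mul_antidiagonal_of_summable_norm
      (summable_norm_pow_div_factorial_mul_pow b 1) (besselSqrtCoeff.summable_norm_mul_pow n c 1)
  · rw [cexp_mul_eq_tsum, ← besselSqrtCoeff.tsum_mul_pow,
      tsum_mul_pow_mul_tsum_mul_pow (summable_norm_pow_div_factorial_mul_pow b z)
        (besselSqrtCoeff.summable_norm_mul_pow n c z)]

theorem sum_Icc_factorial_div_mul_pow_eq_genLaguerre (u : ℝ) {n m : ℕ} (hnm : n ≤ m) :
    ∑ q ∈ Icc n m, (m ! / ((m - q)! * (q - n)! * (q + n)!) : ℝ) * u ^ q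
      = m ! / (m + n)! * u ^ n * genLaguerre (m - n) (2 * n) (-u) := by
  obtain ⟨j, rfl⟩ : ∃ j, m = n + j := ⟨m - n, by omega⟩
  rw [← Ico_add_one_right_eq_Icc, sum_Ico_eq_sum_range, genLaguerre, mul_sum,
    show n + j + 1 - n = j + 1 by omega, Nat.add_sub_cancel_left]
  refine sum_congr rfl fun k hk ↦ ?_
  have hkj : k ≤ j := Nat.lt_succ_iff.1 (mem_range.1 hk)
  rw [Nat.cast_choose ℝ (by omega : j - k ≤ j + 2 * n), neg_neg,
    show n + j - (n + k) = j - k by omega, show n + k - n = k by omega,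
    show j + 2 * n - (j - k) = k + 2 * n by omega, show n + k + n = k + 2 * n by omega,
    show n + j + n = j + 2 * n by omega, pow_add]
  field_simp

theorem deriv_exp_mul_besselJ2n_sqrt_general (a c : ℝ) (ha : 0 < a)
    (n : ℕ) (hn : 1 ≤ n) (G : ℂ → ℂ)
    (hG : ∀ z : ℂ, G z = Complex.exp (-(a : ℂ) ^ 2 * z)
      * ∑' k : ℕ, (-1 : ℂ) ^ k * ((c : ℂ) ^ 2 / 4) ^ (k + n) * z ^ (k + n)
          / ((Nat.factorial k : ℂ) * (Nat.factorial (k + 2 * n) : ℂ))) :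
    (∀ m : ℕ, m ≤ n - 1 → iteratedDeriv m G 0 = 0) ∧
    (∀ m : ℕ, n ≤ m →
      iteratedDeriv m G 0
        = (-1 : ℂ) ^ m * ((Nat.factorial m : ℂ) / (Nat.factorial (m + n) : ℂ))
            * (a : ℂ) ^ (2 * m) * (-(c : ℂ) ^ 2 / (4 * (a : ℂ) ^ 2)) ^ n
            * ((genLaguerre (m - n) (2 * n) (-(c ^ 2 / (4 * a ^ 2))) : ℝ) : ℂ)) ∧
    (∀ m : ℕ, n ≤ m →
      iteratedDeriv m G 0
        = (-1 : ℂ) ^ (m + n) * (a : ℂ) ^ (2 * m)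
            * ∑ p ∈ Finset.Icc n m,
                (Nat.factorial m : ℂ)
                  / ((Nat.factorial (m - p) : ℂ) * (Nat.factorial (p - n) : ℂ)
                      * (Nat.factorial (p + n) : ℂ))
                  * ((c : ℂ) ^ 2 / (4 * (a : ℂ) ^ 2)) ^ p) := by
  have hderiv : ∀ m, iteratedDeriv m G 0
      = m ! * ∑ q ∈ Icc n m, (-(a : ℂ) ^ 2) ^ (m - q) / (m - q)! * besselSqrtCoeff n c q := by
    intro m
    rw [funext hG]
    exact iteratedDeriv_cexp_mul_tsum_besselSqrt _ _ n m
  have hsum : ∀ m, n ≤ m → iteratedDeriv m G 0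
      = (-1 : ℂ) ^ (m + n) * (a : ℂ) ^ (2 * m) * ∑ p ∈ Icc n m,
          m ! / ((m - p)! * (p - n)! * (p + n)!) * ((c : ℂ) ^ 2 / (4 * (a : ℂ) ^ 2)) ^ p := by
    intro m _
    rw [hderiv, mul_sum, mul_sum]
    refine sum_congr rfl fun q hq ↦ ?_
    exact besselSqrtCoeff.factorial_mul_neg_sq_pow_div_mul n c a (by exact_mod_cast ha.ne')
      (mem_Icc.1 hq).1 (mem_Icc.1 hq).2
  refine ⟨fun m hm ↦ ?_, fun m hm ↦ (hsum m hm).trans ?_, hsum⟩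
  · rw [hderiv, Icc_eq_empty (by omega), sum_empty, mul_zero]
  · have hL := congrArg ((↑) : ℝ → ℂ)
      (sum_Icc_factorial_div_mul_pow_eq_genLaguerre (c ^ 2 / (4 * a ^ 2)) hm)
    push_cast at hL
    rw [hL, neg_div, neg_pow ((c : ℂ) ^ 2 / (4 * (a : ℂ) ^ 2))]
    ring

/-- Let `a > 0`, `c > 0`, `n ≥ 1` and let `G(z) = e^{−a²z}·J_{2n}(c√z)` (entire in `z`).
Then `G^{(m)}(0) = 0` for `0 ≤ m ≤ n−1`, while for `m ≥ n`,
`G^{(m)}(0) = (−1)^m·(m!/(m+n)!)·a^{2m}·(−c²/(4a²))^n·L_{m−n}^{2n}(−c²/(4a²))`;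
equivalently `G^{(m)}(0) = (−1)^{m+n}·a^{2m}·∑_{p=n}^m m!/((m−p)!(p−n)!(p+n)!)·(c²/(4a²))^p`. -/
theorem deriv_exp_mul_besselJ2n_sqrt (a c : ℝ) (ha : 0 < a) (hc : 0 < c)
    (n : ℕ) (hn : 1 ≤ n) (G : ℂ → ℂ)
    (hG : ∀ z : ℂ, G z = Complex.exp (-(a : ℂ) ^ 2 * z)
      * ∑' k : ℕ, (-1 : ℂ) ^ k * ((c : ℂ) ^ 2 / 4) ^ (k + n) * z ^ (k + n)
          / ((Nat.factorial k : ℂ) * (Nat.factorial (k + 2 * n) : ℂ))) :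
    (∀ m : ℕ, m ≤ n - 1 → iteratedDeriv m G 0 = 0) ∧
    (∀ m : ℕ, n ≤ m →
      iteratedDeriv m G 0
        = (-1 : ℂ) ^ m * ((Nat.factorial m : ℂ) / (Nat.factorial (m + n) : ℂ))
            * (a : ℂ) ^ (2 * m) * (-(c : ℂ) ^ 2 / (4 * (a : ℂ) ^ 2)) ^ n
            * ((genLaguerre (m - n) (2 * n) (-(c ^ 2 / (4 * a ^ 2))) : ℝ) : ℂ)) ∧
    (∀ m : ℕ, n ≤ m →
      iteratedDeriv m G 0
        = (-1 : ℂ) ^ (m + n) * (a : ℂ) ^ (2 * m)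
            * ∑ p ∈ Finset.Icc n m,
                (Nat.factorial m : ℂ)
                  / ((Nat.factorial (m - p) : ℂ) * (Nat.factorial (p - n) : ℂ)
                      * (Nat.factorial (p + n) : ℂ))
                  * ((c : ℂ) ^ 2 / (4 * (a : ℂ) ^ 2)) ^ p) :=
  deriv_exp_mul_besselJ2n_sqrt_general a c ha n hn G hG
end

section
/- Let a > 0 and c > 0 be real. Define the entire function G(z) = e^{−a²z} · ∑_{k=0}^∞ (−1)^k (c²z/4)^k / (k!)² (i.e. G(z) = e^{−a²z}·J₀(c√z)). Then for every integer m ≥ 0, G^{(m)}(0) = (−1)^m · a^{2m} · L_m(−c²/(4a²)), where L_m(z) = ∑_{k=0}^m binom(m, k)·(−z)^k/k! is the m-th Laguerre polynomial; equivalently, the coefficients ḡ^{(m)}(0) in the expansion G(z) = ∑_{m=0}^∞ (ḡ^{(m)}(0)/m!)·(−z)^m are ḡ^{(m)}(0) = a^{2m}·L_m(−c²/(4a²)), and they are strictly positive. -/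
open Finset

/-- The `m`-th Laguerre polynomial `L_m(z) = ∑_{k=0}^m binom(m,k)·(−z)^k/k!`. -/
noncomputable def laguerre (m : ℕ) (z : ℝ) : ℝ :=
  ∑ k ∈ Finset.range (m + 1), (Nat.choose m k : ℝ) * (-z) ^ k / (Nat.factorial k : ℝ)

/-!
`G` is the Cauchy product of the everywhere absolutely convergent power series of `e^{-a²z}` and
of `J₀(c√z) = ∑ (-c²/4)^k z^k/(k!)²`, so `G^{(m)}(0)` is `m!` times the `m`-th coefficient of
that product. After pulling out `(-1)^m`, this coefficient times `m!` is the binomial sum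
`∑ binom(m,k) (a²)^{m-k} (c²/4)^k / k!`, which is `a^{2m} L_m(-c²/(4a²))`. At a nonpositive
argument every term of the Laguerre sum is nonnegative and the constant term is `1`.
-/

open scoped Nat

section PowerSeries

variable {𝕜 : Type*} [RCLike 𝕜]

def cauchyProduct (p q : ℕ → 𝕜) (n : ℕ) : 𝕜 :=
  ∑ k ∈ range (n + 1), p k * q (n - k)

theorem cauchyProduct_mul_pow (p q : ℕ → 𝕜) (z : 𝕜) (n : ℕ) :
    cauchyProduct p q n * z ^ n = ∑ k ∈ range (n + 1), p k * z ^ k * (q (n - k) * z ^ (n - k)) := by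
  rw [cauchyProduct, sum_mul]
  refine sum_congr rfl fun k hk => ?_
  rw [mul_mul_mul_comm, ← pow_add, Nat.add_sub_cancel' (mem_range_succ_iff.mp hk)]

variable {p q : ℕ → 𝕜}

theorem summable_norm_cauchyProduct_mul_pow (hp : ∀ z : 𝕜, Summable fun n => ‖p n * z ^ n‖)
    (hq : ∀ z : 𝕜, Summable fun n => ‖q n * z ^ n‖) (z : 𝕜) :
    Summable fun n => ‖cauchyProduct p q n * z ^ n‖ := by
  simpa only [cauchyProduct_mul_pow] using
    summable_norm_sum_mul_range_of_summable_norm (hp z) (hq z)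

theorem hasSum_cauchyProduct_mul_pow (hp : ∀ z : 𝕜, Summable fun n => ‖p n * z ^ n‖)
    (hq : ∀ z : 𝕜, Summable fun n => ‖q n * z ^ n‖) (z : 𝕜) :
    HasSum (fun n => cauchyProduct p q n * z ^ n) ((∑' n, p n * z ^ n) * ∑' n, q n * z ^ n) := by
  simpa only [cauchyProduct_mul_pow] using hasSum_sum_range_mul_of_summable_norm (hp z) (hq z)

theorem hasFPowerSeriesOnBall_ofScalars_of_hasSum {f : 𝕜 → 𝕜}
    (hp : ∀ z : 𝕜, Summable fun n => ‖p n * z ^ n‖)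
    (hf : ∀ z, HasSum (fun n => p n * z ^ n) (f z)) :
    HasFPowerSeriesOnBall f (FormalMultilinearSeries.ofScalars 𝕜 p) 0 ⊤ where
  r_le := by
    refine (FormalMultilinearSeries.radius_eq_top_of_summable_norm _ fun r => ?_).ge
    simpa [norm_mul, norm_pow] using hp ((r : ℝ) : 𝕜)
  r_pos := ENNReal.zero_lt_top
  hasSum _ := by simpa [FormalMultilinearSeries.ofScalars_apply_eq, mul_comm] using hf _

theorem iteratedDeriv_zero_eq_factorial_mul_of_hasSum {f : 𝕜 → 𝕜}
    (hp : ∀ z : 𝕜, Summable fun n => ‖p n * z ^ n‖)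
    (hf : ∀ z, HasSum (fun n => p n * z ^ n) (f z)) (m : ℕ) :
    iteratedDeriv m f 0 = m ! * p m := by
  rw [iteratedDeriv_eq_iteratedFDeriv,
    ← (hasFPowerSeriesOnBall_ofScalars_of_hasSum hp hf).factorial_smul 1 m]
  simp [nsmul_eq_mul]

def expCoeff (w : 𝕜) (n : ℕ) : 𝕜 := w ^ n / n !

def besselCoeff (w : 𝕜) (n : ℕ) : 𝕜 := w ^ n / (n ! : 𝕜) ^ 2

theorem summable_norm_expCoeff_mul_pow (w z : 𝕜) :
    Summable fun n => ‖expCoeff w n * z ^ n‖ := by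
  refine (Real.summable_pow_div_factorial ‖w * z‖).congr fun n => ?_
  simp [expCoeff, norm_mul, norm_div, norm_pow, mul_pow, div_mul_eq_mul_div]

theorem norm_besselCoeff_mul_pow_le (w z : 𝕜) (n : ℕ) :
    ‖besselCoeff w n * z ^ n‖ ≤ ‖expCoeff w n * z ^ n‖ := by
  have hfac : (1 : ℝ) ≤ n ! := mod_cast n.factorial_pos
  simp only [besselCoeff, expCoeff, norm_mul, norm_div, norm_pow, RCLike.norm_natCast]
  gcongr
  nlinarith

theorem summable_norm_besselCoeff_mul_pow (w z : 𝕜) :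
    Summable fun n => ‖besselCoeff w n * z ^ n‖ :=
  (summable_norm_expCoeff_mul_pow w z).of_nonneg_of_le (fun _ => norm_nonneg _)
    (norm_besselCoeff_mul_pow_le w z)

theorem factorial_mul_cauchyProduct_expCoeff_besselCoeff (s t : 𝕜) (m : ℕ) :
    m ! * cauchyProduct (expCoeff (-s)) (besselCoeff (-t)) m
      = (-1) ^ m * ∑ k ∈ range (m + 1), m.choose k * s ^ (m - k) * t ^ k / k ! := by
  rw [cauchyProduct, ← sum_range_reflect, mul_sum, mul_sum]
  refine sum_congr rfl fun k hk => ?_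
  have hkm : k ≤ m := mem_range_succ_iff.mp hk
  rw [Nat.add_sub_cancel, Nat.sub_sub_self hkm, expCoeff, besselCoeff, Nat.cast_choose 𝕜 hkm,
    neg_pow s, neg_pow t, ← Nat.sub_add_cancel hkm, pow_add, Nat.add_sub_cancel]
  field_simp

end PowerSeries

theorem Complex.hasSum_expCoeff_mul_pow (w z : ℂ) :
    HasSum (fun n => expCoeff w n * z ^ n) (Complex.exp (w * z)) := by
  simpa only [Complex.exp_eq_exp_ℂ, expCoeff, mul_pow, div_mul_eq_mul_div]
    using NormedSpace.expSeries_div_hasSum_exp (w * z)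

theorem laguerre_neg_pos {x : ℝ} (hx : 0 ≤ x) (m : ℕ) : 0 < laguerre m (-x) := by
  rw [laguerre]
  refine sum_pos' (fun k _ => by rw [neg_neg]; positivity) ⟨0, by simp, by simp⟩

theorem pow_mul_laguerre_neg_div {s : ℝ} (hs : s ≠ 0) (t : ℝ) (m : ℕ) :
    s ^ m * laguerre m (-(t / s))
      = ∑ k ∈ range (m + 1), m.choose k * s ^ (m - k) * t ^ k / k ! := by
  rw [laguerre, mul_sum]
  refine sum_congr rfl fun k hk => ?_
  rw [neg_neg, div_pow, ← Nat.sub_add_cancel (mem_range_succ_iff.mp hk), pow_add,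
    Nat.add_sub_cancel]
  field_simp

theorem deriv_exp_mul_besselJ0_sqrt_general (a c : ℝ) (ha : 0 < a)
    (G : ℂ → ℂ)
    (hG : ∀ z : ℂ, G z = Complex.exp (-(a : ℂ) ^ 2 * z)
      * ∑' k : ℕ, (-1 : ℂ) ^ k * ((c : ℂ) ^ 2 * z / 4) ^ k / ((Nat.factorial k : ℂ)) ^ 2) :
    ∀ m : ℕ,
      iteratedDeriv m G 0
        = (-1 : ℂ) ^ m * ((a ^ (2 * m) * laguerre m (-(c ^ 2 / (4 * a ^ 2))) : ℝ) : ℂ) ∧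
      0 < a ^ (2 * m) * laguerre m (-(c ^ 2 / (4 * a ^ 2))) := by
  have hbessel (z : ℂ) : (∑' k : ℕ, (-1 : ℂ) ^ k * ((c : ℂ) ^ 2 * z / 4) ^ k / (k ! : ℂ) ^ 2)
      = ∑' k, besselCoeff (-((c : ℂ) ^ 2 / 4)) k * z ^ k :=
    tsum_congr fun k => by rw [besselCoeff, neg_pow (_ / 4)]; ring
  have hG_sum (z : ℂ) : HasSum (fun n => cauchyProduct (expCoeff (-(a : ℂ) ^ 2))
      (besselCoeff (-((c : ℂ) ^ 2 / 4))) n * z ^ n) (G z) := by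
    rw [hG, hbessel, ← (Complex.hasSum_expCoeff_mul_pow _ z).tsum_eq]
    exact hasSum_cauchyProduct_mul_pow (summable_norm_expCoeff_mul_pow _)
      (summable_norm_besselCoeff_mul_pow _) z
  intro m
  refine ⟨?_, mul_pos (by positivity) (laguerre_neg_pos (by positivity) m)⟩
  rw [iteratedDeriv_zero_eq_factorial_mul_of_hasSum (summable_norm_cauchyProduct_mul_pow
      (summable_norm_expCoeff_mul_pow _) (summable_norm_besselCoeff_mul_pow _)) hG_sum,
    factorial_mul_cauchyProduct_expCoeff_besselCoeff, pow_mul, ← div_div,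
    pow_mul_laguerre_neg_div (by positivity)]
  norm_cast

/-- Let `a > 0`, `c > 0` and let `G(z) = e^{−a²z}·J₀(c√z)` (as an entire function of `z`).
Then `G^{(m)}(0) = (−1)^m·a^{2m}·L_m(−c²/(4a²))` for every `m ≥ 0`; equivalently the
coefficients `ḡ^{(m)}(0)` in `G(z) = ∑ (ḡ^{(m)}(0)/m!)·(−z)^m` are
`ḡ^{(m)}(0) = a^{2m}·L_m(−c²/(4a²))`, and they are strictly positive. -/
theorem deriv_exp_mul_besselJ0_sqrt (a c : ℝ) (ha : 0 < a) (hc : 0 < c)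
    (G : ℂ → ℂ)
    (hG : ∀ z : ℂ, G z = Complex.exp (-(a : ℂ) ^ 2 * z)
      * ∑' k : ℕ, (-1 : ℂ) ^ k * ((c : ℂ) ^ 2 * z / 4) ^ k / ((Nat.factorial k : ℂ)) ^ 2) :
    ∀ m : ℕ,
      iteratedDeriv m G 0
        = (-1 : ℂ) ^ m * ((a ^ (2 * m) * laguerre m (-(c ^ 2 / (4 * a ^ 2))) : ℝ) : ℂ) ∧
      0 < a ^ (2 * m) * laguerre m (-(c ^ 2 / (4 * a ^ 2))) :=
  deriv_exp_mul_besselJ0_sqrt_general a c ha G hG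
end

section
/- For every real x > 0, ∑_{p=0}^∞ [ψ(p+1)/p!]·x^p = e^x·(Γ(0, x) + ln x), where ψ(p+1) = −γ + ∑_{j=1}^p 1/j is the digamma function at the positive integer p+1 (γ being the Euler–Mascheroni constant) and Γ(0, x) = ∫_x^∞ e^{−t}/t dt; the series on the left converges absolutely. -/
open MeasureTheory Real Set Filter Topology
open scoped Nat

local notation "γ" => Real.eulerMascheroniConstant

/-!
Write `S(x) = ∑ ψ(p+1) x^p / p!` and `Ein(x) = ∫_0^x (1 - e^{-t}) / t dt`. Since
`ψ(p+2) - ψ(p+1) = 1/(p+1)`, termwise differentiation gives `S' - S = (e^x - 1) / x`, i.e.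
`(e^{-x} S)' = (1 - e^{-x}) / x`, so `e^{-x} S(x) = S(0) + Ein(x) = -γ + Ein(x)`.
On the other hand, integrating `log t · e^{-t}` by parts on `(0, x]` and on `(x, ∞)` and using
`∫_0^∞ log t · e^{-t} dt = Γ'(1) = -γ` gives `Γ(0, x) + ln x = -γ + Ein(x)`.
-/

theorem integrableOn_one_sub_exp_neg_div_Ioc (b : ℝ) :
    IntegrableOn (fun t => (1 - exp (-t)) / t) (Ioc 0 b) := by
  refine Integrable.mono' (integrable_const 1) ?_ ?_
  · refine ContinuousOn.aestronglyMeasurable ?_ measurableSet_Ioc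
    exact (continuous_const.sub (continuous_exp.comp continuous_neg)).continuousOn.div
      continuousOn_id fun t ht => ht.1.ne'
  · filter_upwards [ae_restrict_mem measurableSet_Ioc] with t ⟨ht, _⟩
    have hle : 1 - exp (-t) ≤ t := by linarith [add_one_le_exp (-t)]
    have hnonneg : 0 ≤ 1 - exp (-t) := by simpa using exp_le_one_iff.mpr (neg_nonpos.mpr ht.le)
    rw [Real.norm_eq_abs, abs_of_nonneg (div_nonneg hnonneg ht.le)]
    exact div_le_one_of_le₀ hle ht.le

theorem abs_log_le_two_mul_rpow_neg_half_add_self {t : ℝ} (ht : 0 < t) :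
    |log t| ≤ 2 * t ^ (-(1 : ℝ) / 2) + t := by
  have hlog := log_le_sub_one_of_pos ht
  have hrpow : 0 < t ^ (-(1 : ℝ) / 2) := rpow_pos_of_pos ht _
  rcases le_total 1 t with h | h
  · rw [abs_of_nonneg (log_nonneg h)]
    linarith
  · rw [abs_of_nonpos (log_nonpos ht.le h)]
    have := log_le_sub_one_of_pos hrpow
    rw [log_rpow ht] at this
    linarith

theorem integrableOn_log_mul_exp_neg_Ioi :
    IntegrableOn (fun t => log t * exp (-t)) (Ioi 0) := by
  have hrpow : ∀ s : ℝ, -1 < s → IntegrableOn (fun t => t ^ s * exp (-t)) (Ioi 0) :=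
    fun s hs => (integrableOn_rpow_mul_exp_neg_rpow hs one_pos).congr_fun (fun t _ => by simp)
      measurableSet_Ioi
  have hself : IntegrableOn (fun t => t * exp (-t)) (Ioi 0) :=
    (hrpow 1 (by norm_num)).congr_fun (fun t _ => by simp) measurableSet_Ioi
  have hbound := ((hrpow (-(1 : ℝ) / 2) (by norm_num)).const_mul 2).add hself
  refine hbound.mono'
    (measurable_log.mul (measurable_exp.comp measurable_neg)).aestronglyMeasurable ?_
  filter_upwards [ae_restrict_mem measurableSet_Ioi] with t ht
  rw [Real.norm_eq_abs, abs_mul, abs_of_pos (exp_pos _)]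
  calc |log t| * exp (-t) ≤ (2 * t ^ (-(1 : ℝ) / 2) + t) * exp (-t) :=
        mul_le_mul_of_nonneg_right (abs_log_le_two_mul_rpow_neg_half_add_self ht) (exp_pos _).le
    _ = _ := by simp only [Pi.add_apply]; ring

theorem integrableOn_exp_neg_div_Ioi {x : ℝ} (hx : 0 < x) :
    IntegrableOn (fun t => exp (-t) / t) (Ioi x) := by
  have hexp : IntegrableOn (fun t => exp (-t) / x) (Ioi x) :=
    ((exp_neg_integrableOn_Ioi x one_pos).congr_fun (fun t _ => by simp)
      measurableSet_Ioi).div_const x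
  refine hexp.mono' ((measurable_exp.comp measurable_neg).div measurable_id).aestronglyMeasurable ?_
  filter_upwards [ae_restrict_mem measurableSet_Ioi] with t ht
  rw [Real.norm_eq_abs, abs_of_pos (div_pos (exp_pos _) (hx.trans ht))]
  exact div_le_div_of_nonneg_left (exp_pos _).le hx ht.le

theorem integral_log_mul_exp_neg_Ioi : ∫ t in Ioi 0, log t * exp (-t) = -γ := by
  have hGamma : HasDerivAt Complex.Gamma (∫ t in Ioi 0, log t * exp (-t) : ℝ) 1 := by
    have h := Complex.hasDerivAt_GammaIntegral (s := 1) (by norm_num)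
    have hIntegral : ∫ t : ℝ in Ioi 0, (t : ℂ) ^ ((1 : ℂ) - 1) * (log t * exp (-t))
        = ((∫ t in Ioi 0, log t * exp (-t) : ℝ) : ℂ) := by
      refine (setIntegral_congr_fun measurableSet_Ioi fun t _ => ?_).trans integral_ofReal
      simp
    rw [hIntegral] at h
    refine h.congr_of_eventuallyEq ?_
    filter_upwards [(isOpen_lt continuous_const Complex.continuous_re).mem_nhds
      (by norm_num : (0 : ℝ) < (1 : ℂ).re)] with s hs
    exact Complex.Gamma_eq_integral hs
  exact_mod_cast hGamma.unique Complex.hasDerivAt_Gamma_one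

theorem integral_exp_neg_div_Ioi {x : ℝ} (hx : 0 < x) :
    ∫ t in Ioi x, exp (-t) / t = -(exp (-x) * log x) + ∫ t in Ioi x, log t * exp (-t) := by
  have hlog := integrableOn_log_mul_exp_neg_Ioi.mono_set (Ioi_subset_Ioi hx.le)
  have hderiv : ∀ t ∈ Ici x, HasDerivAt (fun t => -(exp (-t) * log t))
      (log t * exp (-t) - exp (-t) / t) t := fun t ht =>
    (((hasDerivAt_neg t).exp.mul (hasDerivAt_log (hx.trans_le ht).ne')).neg).congr_deriv (by ring)
  have hlim : Tendsto (fun t => -(exp (-t) * log t)) atTop (𝓝 0) := by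
    rw [← neg_zero]
    refine (squeeze_zero_norm' ?_ (by simpa using tendsto_pow_mul_exp_neg_atTop_nhds_zero 1)).neg
    filter_upwards [eventually_ge_atTop 1] with t ht
    rw [Real.norm_eq_abs, abs_mul, abs_of_pos (exp_pos _), abs_of_nonneg (log_nonneg ht), mul_comm]
    exact mul_le_mul_of_nonneg_right ((log_le_sub_one_of_pos (by linarith)).trans (by linarith))
      (exp_pos _).le
  have hdiv := integrableOn_exp_neg_div_Ioi hx
  have h := integral_Ioi_of_hasDerivAt_of_tendsto' hderiv (hlog.sub hdiv) hlim
  rw [integral_sub hlog hdiv] at h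
  linarith

theorem integral_one_sub_exp_neg_div {x : ℝ} (hx : 0 ≤ x) :
    ∫ t in 0..x, (1 - exp (-t)) / t
      = (1 - exp (-x)) * log x - ∫ t in 0..x, log t * exp (-t) := by
  have hlog : IntervalIntegrable (fun t => log t * exp (-t)) volume 0 x :=
    (intervalIntegrable_iff_integrableOn_Ioc_of_le hx).2
      (integrableOn_log_mul_exp_neg_Ioi.mono_set Ioc_subset_Ioi_self)
  have hdiv : IntervalIntegrable (fun t => (1 - exp (-t)) / t) volume 0 x :=
    (intervalIntegrable_iff_integrableOn_Ioc_of_le hx).2 (integrableOn_one_sub_exp_neg_div_Ioc x)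
  have hderiv : ∀ t ∈ Ioi (0 : ℝ), HasDerivAt (fun t => (1 - exp (-t)) * log t)
      (log t * exp (-t) + (1 - exp (-t)) / t) t := fun t ht =>
    (((hasDerivAt_neg t).exp.const_sub 1).mul (hasDerivAt_log (ne_of_gt ht))).congr_deriv
      (by field_simp)
  have hlim : Tendsto (fun t => (1 - exp (-t)) * log t) (𝓝[>] 0) (𝓝 0) := by
    have hmul : Tendsto (fun t => t * log t) (𝓝[>] 0) (𝓝 0) := by
      simpa using (continuous_mul_log.tendsto 0).mono_left nhdsWithin_le_nhds
    refine squeeze_zero_norm' ?_ (by simpa using hmul.norm)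
    filter_upwards [self_mem_nhdsWithin] with t (ht : 0 < t)
    have hle : 1 - exp (-t) ≤ t := by linarith [add_one_le_exp (-t)]
    have hnonneg : 0 ≤ 1 - exp (-t) := by simpa using exp_le_one_iff.mpr (neg_nonpos.mpr ht.le)
    rw [norm_mul, Real.norm_of_nonneg hnonneg, Real.norm_eq_abs, abs_of_pos ht]
    exact mul_le_mul_of_nonneg_right hle (abs_nonneg _)
  have hcont : ContinuousOn (fun t => (1 - exp (-t)) * log t) (Icc 0 x) := by
    intro t ht
    rcases ht.1.eq_or_lt with rfl | ht0
    · refine (continuousWithinAt_Ioi_iff_Ici.mp ?_).mono Icc_subset_Ici_self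
      simpa [ContinuousWithinAt] using hlim
    · exact (hderiv t ht0).continuousAt.continuousWithinAt
  have h := intervalIntegral.integral_eq_sub_of_hasDerivAt_of_le hx hcont
    (fun t ht => hderiv t ht.1) (hlog.add hdiv)
  rw [intervalIntegral.integral_add hlog hdiv] at h
  simp only [neg_zero, exp_zero, sub_self, zero_mul, sub_zero] at h
  linarith

theorem integral_exp_neg_div_Ioi_add_log {x : ℝ} (hx : 0 < x) :
    (∫ t in Ioi x, exp (-t) / t) + log x = -γ + ∫ t in 0..x, (1 - exp (-t)) / t := by
  have hsplit := intervalIntegral.integral_interval_add_Ioi integrableOn_log_mul_exp_neg_Ioi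
    (integrableOn_log_mul_exp_neg_Ioi.mono_set (Ioi_subset_Ioi hx.le))
  rw [integral_log_mul_exp_neg_Ioi] at hsplit
  rw [integral_exp_neg_div_Ioi hx, integral_one_sub_exp_neg_div hx.le]
  linarith

section ExponentialGeneratingFunction

variable {c : ℕ → ℝ} {C K : ℝ}

theorem summable_abs_div_factorial_mul_pow (hc : ∀ p, |c p| ≤ C * K ^ p) (x : ℝ) :
    Summable fun p => |c p / p ! * x ^ p| := by
  refine .of_nonneg_of_le (fun p => abs_nonneg _) (fun p => ?_)
    ((Real.summable_pow_div_factorial (K * |x|)).mul_left C)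
  rw [abs_mul, abs_div, Nat.abs_cast, abs_pow, mul_pow, ← mul_div_assoc, div_mul_eq_mul_div,
    ← mul_assoc]
  gcongr
  exact hc p

theorem hasDerivAt_tsum_div_factorial_mul_pow (hc : ∀ p, |c p| ≤ C * K ^ p) (x : ℝ) :
    HasDerivAt (fun y => ∑' p, c p / p ! * y ^ p) (∑' p, c (p + 1) / p ! * x ^ p) x := by
  have hc' : ∀ p, |c (p + 1)| ≤ C * K * K ^ p := fun p => by
    rw [mul_assoc, ← pow_succ']; exact hc (p + 1)
  have hsplit : (fun y => ∑' p, c p / p ! * y ^ p)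
      = fun y => c 0 + ∑' p, c (p + 1) / (p + 1) ! * y ^ (p + 1) := by
    funext y
    rw [(summable_abs_div_factorial_mul_pow hc y).of_abs.tsum_eq_zero_add]
    simp
  rw [hsplit]
  have hR : x ∈ Metric.ball (0 : ℝ) (|x| + 1) := by simp
  have hderiv : ∀ (p : ℕ) (y : ℝ), y ∈ Metric.ball (0 : ℝ) (|x| + 1) →
      HasDerivAt (fun y => c (p + 1) / (p + 1) ! * y ^ (p + 1)) (c (p + 1) / p ! * y ^ p) y := by
    intro p y _
    refine ((hasDerivAt_pow (p + 1) y).const_mul (c (p + 1) / (p + 1) !)).congr_deriv ?_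
    rw [Nat.factorial_succ]
    push_cast
    field_simp
  have hbound : ∀ (p : ℕ) (y : ℝ), y ∈ Metric.ball (0 : ℝ) (|x| + 1) →
      ‖c (p + 1) / p ! * y ^ p‖ ≤ |c (p + 1) / p ! * (|x| + 1) ^ p| := by
    intro p y hy
    rw [mem_ball_zero_iff, Real.norm_eq_abs] at hy
    rw [Real.norm_eq_abs, abs_mul, abs_mul, abs_pow, abs_pow]
    exact mul_le_mul_of_nonneg_left (pow_le_pow_left₀ (abs_nonneg y)
      (hy.le.trans (le_abs_self _)) p) (abs_nonneg _)
  exact (hasDerivAt_tsum_of_isPreconnected (summable_abs_div_factorial_mul_pow hc' (|x| + 1))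
    Metric.isOpen_ball (convex_ball _ _).isPreconnected hderiv hbound hR
    ((summable_nat_add_iff 1).mpr (summable_abs_div_factorial_mul_pow hc x).of_abs)
    hR).const_add (c 0)

end ExponentialGeneratingFunction

theorem hasSum_pow_div_factorial_succ {x : ℝ} (hx : x ≠ 0) :
    HasSum (fun p => x ^ p / (p + 1) !) ((exp x - 1) / x) := by
  have h := (hasSum_nat_add_iff' 1).mpr
    (Real.exp_eq_exp_ℝ ▸ NormedSpace.expSeries_div_hasSum_exp x)
  simp only [Finset.range_one, Finset.sum_singleton, pow_zero, Nat.factorial_zero, Nat.cast_one,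
    div_one] at h
  have hterm : (fun p => x ^ p / (p + 1) !) = fun p => x ^ (p + 1) / (p + 1) ! / x := by
    funext p
    rw [pow_succ]
    field_simp
  rw [hterm]
  exact h.div_const x

/-- `digammaNat p = ψ(p + 1)`. -/
noncomputable def digammaNat (p : ℕ) : ℝ := -γ + ∑ j ∈ Finset.range p, (1 : ℝ) / (j + 1)

theorem digammaNat_zero : digammaNat 0 = -γ := by simp [digammaNat]

theorem digammaNat_succ (p : ℕ) : digammaNat (p + 1) = digammaNat p + 1 / (p + 1) := by
  simp only [digammaNat, Finset.sum_range_succ]; ring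

theorem abs_digammaNat_le (p : ℕ) : |digammaNat p| ≤ 1 * 2 ^ p := by
  have harmonic_le : ∑ j ∈ Finset.range p, (1 : ℝ) / (j + 1) ≤ p := by
    calc ∑ j ∈ Finset.range p, (1 : ℝ) / (j + 1) ≤ ∑ _j ∈ Finset.range p, 1 :=
          Finset.sum_le_sum fun j _ => div_le_one_of_le₀ (by simp) (by positivity)
      _ = p := by simp
  have hp : (p : ℝ) + 1 ≤ 2 ^ p := by exact_mod_cast Nat.lt_two_pow_self
  have hγ := Real.eulerMascheroniConstant_lt_two_thirds
  have hγ' := Real.one_half_lt_eulerMascheroniConstant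
  have hH : 0 ≤ ∑ j ∈ Finset.range p, (1 : ℝ) / (j + 1) :=
    Finset.sum_nonneg fun j _ => by positivity
  rw [digammaNat, abs_le]
  constructor <;> linarith

theorem hasDerivAt_exp_neg_mul_tsum_digammaNat {x : ℝ} (hx : x ≠ 0) :
    HasDerivAt (fun y => exp (-y) * ∑' p, digammaNat p / p ! * y ^ p) ((1 - exp (-x)) / x) x := by
  have hsum := fun y => (summable_abs_div_factorial_mul_pow abs_digammaNat_le y).of_abs
  have hsum' : Summable fun p => digammaNat (p + 1) / p ! * x ^ p :=
    (summable_abs_div_factorial_mul_pow (C := 2) (K := 2)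
      (fun p => (abs_digammaNat_le (p + 1)).trans_eq (by ring)) x).of_abs
  have hdiff : ∑' p, digammaNat (p + 1) / p ! * x ^ p - ∑' p, digammaNat p / p ! * x ^ p
      = (exp x - 1) / x := by
    rw [← hsum'.tsum_sub (hsum x), ← (hasSum_pow_div_factorial_succ hx).tsum_eq]
    congr 1 with p
    rw [digammaNat_succ, Nat.factorial_succ]
    push_cast
    field_simp
    ring
  refine ((hasDerivAt_neg x).exp.mul
    (hasDerivAt_tsum_div_factorial_mul_pow abs_digammaNat_le x)).congr_deriv ?_
  calc _ = exp (-x) * (∑' p, digammaNat (p + 1) / p ! * x ^ p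
          - ∑' p, digammaNat p / p ! * x ^ p) := by ring
    _ = (1 - exp (-x)) / x := by
      rw [hdiff, mul_div_assoc', mul_sub, ← exp_add, neg_add_cancel, exp_zero, mul_one]

theorem exp_neg_mul_tsum_digammaNat {x : ℝ} (hx : 0 ≤ x) :
    exp (-x) * ∑' p, digammaNat p / p ! * x ^ p = -γ + ∫ t in 0..x, (1 - exp (-t)) / t := by
  have hS : Continuous fun y => ∑' p, digammaNat p / p ! * y ^ p :=
    continuous_iff_continuousAt.2 fun y =>
      (hasDerivAt_tsum_div_factorial_mul_pow abs_digammaNat_le y).continuousAt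
  rw [intervalIntegral.integral_eq_sub_of_hasDerivAt_of_le
    (f := fun y => exp (-y) * ∑' p, digammaNat p / p ! * y ^ p) hx
    ((continuous_exp.comp continuous_neg).mul hS).continuousOn
    (fun y hy => hasDerivAt_exp_neg_mul_tsum_digammaNat hy.1.ne')
    ((intervalIntegrable_iff_integrableOn_Ioc_of_le hx).2 (integrableOn_one_sub_exp_neg_div_Ioc x))]
  have hS0 : ∑' p, digammaNat p / p ! * (0 : ℝ) ^ p = -γ := by
    rw [tsum_eq_single 0 fun p hp => by simp [hp]]
    simp [digammaNat_zero]
  rw [hS0, neg_zero, exp_zero, one_mul]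
  ring

/-- For every real `x > 0`, `∑_{p=0}^∞ [ψ(p+1)/p!]·x^p = e^x·(Γ(0,x) + ln x)`,
where `ψ(p+1) = −γ + ∑_{j=1}^p 1/j` is the digamma function at `p+1`
(`γ` the Euler–Mascheroni constant) and `Γ(0,x) = ∫_x^∞ e^{−t}/t dt`;
the series converges absolutely. -/
theorem digamma_series_eq_exp_mul_incGamma (x : ℝ) (hx : 0 < x) :
    Summable (fun p : ℕ =>
      |(-Real.eulerMascheroniConstant + ∑ j ∈ Finset.range p, (1 : ℝ) / (j + 1))
        / (Nat.factorial p : ℝ) * x ^ p|) ∧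
    ∑' p : ℕ, (-Real.eulerMascheroniConstant + ∑ j ∈ Finset.range p, (1 : ℝ) / (j + 1))
        / (Nat.factorial p : ℝ) * x ^ p
      = Real.exp x * ((∫ t in Ioi x, Real.exp (-t) / t) + Real.log x) := by
  refine ⟨summable_abs_div_factorial_mul_pow abs_digammaNat_le x, ?_⟩
  change ∑' p, digammaNat p / p ! * x ^ p = _
  rw [integral_exp_neg_div_Ioi_add_log hx, ← exp_neg_mul_tsum_digammaNat hx.le, ← mul_assoc,
    ← exp_add, add_neg_cancel, exp_zero, one_mul]
end
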